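/- For every i, j ∈ (1/2)ℤ for which the spaces are nonempty, and for every F ∈ W_i and G ∈ W_j, the Poisson bracket {F, G} lies in W_{i+j+3/2}. -/

import Mathlib

noncomputable section

/-- Squared Euclidean norm on `ℝ³`. -/
def normSq (v : Fin 3 → ℝ) : ℝ := ∑ i, v i ^ 2

/-- Euclidean norm on `ℝ³`. -/
def nrm (v : Fin 3 → ℝ) : ℝ := Real.sqrt (normSq v)

/-- Euclidean inner product `p·q`. -/
def dotP (p q : Fin 3 → ℝ) : ℝ := ∑ i, p i * q i

/-- Partial derivative `∂F/∂q^k` of a Hamiltonian function at `(q,p)`. -/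
def pdQ (F : (Fin 3 → ℝ) → (Fin 3 → ℝ) → ℝ) (q p : Fin 3 → ℝ) (k : Fin 3) : ℝ :=
  deriv (fun t => F (Function.update q k t) p) (q k)

/-- Partial derivative `∂F/∂p^k` of a Hamiltonian function at `(q,p)`. -/
def pdP (F : (Fin 3 → ℝ) → (Fin 3 → ℝ) → ℝ) (q p : Fin 3 → ℝ) (k : Fin 3) : ℝ :=
  deriv (fun t => F q (Function.update p k t)) (p k)

/-- The Hamiltonian vector field `X_F(q,p) = (∂F/∂p, −∂F/∂q)`. -/
def Xham (F : (Fin 3 → ℝ) → (Fin 3 → ℝ) → ℝ) (q p : Fin 3 → ℝ) :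
    (Fin 3 → ℝ) × (Fin 3 → ℝ) :=
  (fun k => pdP F q p k, fun k => -pdQ F q p k)


/-- The canonical Poisson bracket `{F,G} = Σ_k (∂F/∂q^k ∂G/∂p^k − ∂F/∂p^k ∂G/∂q^k)`. -/
def pbr (F G : (Fin 3 → ℝ) → (Fin 3 → ℝ) → ℝ) (q p : Fin 3 → ℝ) : ℝ :=
  ∑ k, (pdQ F q p k * pdP G q p k - pdP F q p k * pdQ G q p k)

/-- The phase space `M = (ℝ³ ∖ {0}) × ℝ³`. -/
abbrev Mspace := {q : Fin 3 → ℝ // q ≠ 0} × (Fin 3 → ℝ)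

/-- Extension (by junk value `0` at `q = 0`) of a function on `M` to all of `ℝ³ × ℝ³`;
used only to define derivatives, which are local and hence independent of the extension. -/
def extM (F : Mspace → ℝ) : (Fin 3 → ℝ) → (Fin 3 → ℝ) → ℝ :=
  fun q p => if h : q ≠ 0 then F (⟨q, h⟩, p) else 0

/-- The canonical Poisson bracket of two functions on `M`. -/
def pbrM (F G : Mspace → ℝ) : Mspace → ℝ :=
  fun x => pbr (extM F) (extM G) x.1.1 x.2

/-- The monomial function `(q,p) ↦ (|p|²)^l (p·q)^n / |q|^m` on `M`. -/
def Wmon (l m n : ℕ) : Mspace → ℝ :=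
  fun x => (normSq x.2) ^ l * (dotP x.2 x.1.1) ^ n / (nrm x.1.1) ^ m

/-- `W_j`: the real span, inside the vector space of functions `M → ℝ`, of the monomials
`(|p|²)^l (p·q)^n / |q|^m` over all `(l,m,n) ∈ ℕ³` with `l + m − n/2 = j + 1`. -/
def Wspace (j : ℚ) : Submodule ℝ (Mspace → ℝ) :=
  Submodule.span ℝ
    {F | ∃ l m n : ℕ, (l : ℚ) + (m : ℚ) - (n : ℚ) / 2 = j + 1 ∧ F = Wmon l m n}


lemma normSq_nonneg (v : Fin 3 → ℝ) : 0 ≤ normSq v :=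
  Finset.sum_nonneg fun i _ => sq_nonneg _

lemma normSq_pos {v : Fin 3 → ℝ} (hv : v ≠ 0) : 0 < normSq v := by
  rcases (normSq_nonneg v).lt_or_eq with h | h
  · exact h
  · exfalso; apply hv; funext i
    have := (Finset.sum_eq_zero_iff_of_nonneg (fun i _ => sq_nonneg (v i))).1 h.symm i
      (Finset.mem_univ i)
    have : v i = 0 := by nlinarith [this]
    simpa using this

lemma nrm_pow_eq {v : Fin 3 → ℝ} (hv : v ≠ 0) (m : ℕ) :
    nrm v ^ m = normSq v ^ ((m : ℝ)/2) := by
  rw [nrm, Real.sqrt_eq_rpow, ← Real.rpow_natCast (normSq v ^ ((1:ℝ)/2)) m,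
    ← Real.rpow_mul (normSq_nonneg v)]
  ring_nf

lemma Wmon_apply (l m n : ℕ) (x : Mspace) :
    Wmon l m n x = normSq x.2 ^ l * dotP x.2 x.1.1 ^ n * normSq x.1.1 ^ (-(m:ℝ)/2) := by
  rw [Wmon, nrm_pow_eq x.1.2, div_eq_mul_inv, ← Real.rpow_neg (normSq_nonneg _)]
  ring_nf

lemma normSq_update (q : Fin 3 → ℝ) (k : Fin 3) (t : ℝ) :
    normSq (Function.update q k t) = t ^ 2 + (normSq q - q k ^ 2) := by
  fin_cases k <;> simp [normSq, Fin.sum_univ_three, Function.update] <;> ring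

lemma dotP_update_right (p q : Fin 3 → ℝ) (k : Fin 3) (t : ℝ) :
    dotP p (Function.update q k t) = p k * t + (dotP p q - p k * q k) := by
  fin_cases k <;> simp [dotP, Fin.sum_univ_three, Function.update] <;> ring

lemma dotP_update_left (p q : Fin 3 → ℝ) (k : Fin 3) (t : ℝ) :
    dotP (Function.update p k t) q = q k * t + (dotP p q - p k * q k) := by
  fin_cases k <;> simp [dotP, Fin.sum_univ_three, Function.update] <;> ring

lemma sum3 (q p : Fin 3 → ℝ) (A B C D : ℝ) :
    ∑ k : Fin 3, (A * p k + B * q k) * (C * p k + D * q k)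
      = A*C*normSq p + (A*D+B*C)*dotP p q + B*D*normSq q := by
  simp [Fin.sum_univ_three, normSq, dotP]; ring

def DQv (l m n : ℕ) (q p : Fin 3 → ℝ) (k : Fin 3) : ℝ :=
  ((n:ℝ) * normSq p ^ l * dotP p q ^ (n-1) * normSq q ^ (-(m:ℝ)/2)) * p k
  + (-(m:ℝ) * normSq p ^ l * dotP p q ^ n * normSq q ^ (-(m:ℝ)/2 - 1)) * q k

def DPv (l m n : ℕ) (q p : Fin 3 → ℝ) (k : Fin 3) : ℝ :=
  (2*(l:ℝ) * normSq p ^ (l-1) * dotP p q ^ n * normSq q ^ (-(m:ℝ)/2)) * p k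
  + ((n:ℝ) * normSq p ^ l * dotP p q ^ (n-1) * normSq q ^ (-(m:ℝ)/2)) * q k

lemma hasDerivAt_extQ (l m n : ℕ) {q : Fin 3 → ℝ} (p : Fin 3 → ℝ) (hq : q ≠ 0) (k : Fin 3) :
    HasDerivAt (fun t => extM (Wmon l m n) (Function.update q k t) p)
      (DQv l m n q p k) (q k) := by
  set a := normSq q - q k ^ 2 with ha
  set b := dotP p q - p k * q k with hb
  have hx : (0:ℝ) < q k ^ 2 + a := by rw [ha]; ring_nf; exact normSq_pos hq
  -- the smooth model function
  have hg : HasDerivAt (fun t : ℝ => normSq p ^ l * (p k * t + b) ^ n * (t ^ 2 + a) ^ (-(m:ℝ)/2))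
      (DQv l m n q p k) (q k) := by
    have h1 : HasDerivAt (fun t : ℝ => p k * t + b) (p k) (q k) := by
      simpa using ((hasDerivAt_id (q k)).const_mul (p k)).add_const b
    have h2 : HasDerivAt (fun t : ℝ => (p k * t + b) ^ n)
        ((n:ℝ) * (p k * q k + b) ^ (n-1) * p k) (q k) := h1.pow n
    have h3 : HasDerivAt (fun t : ℝ => t ^ 2 + a) (2 * q k) (q k) := by
      simpa using (hasDerivAt_pow 2 (q k)).add_const a
    have h4 : HasDerivAt (fun t : ℝ => (t ^ 2 + a) ^ (-(m:ℝ)/2))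
        (2 * q k * (-(m:ℝ)/2) * (q k ^ 2 + a) ^ (-(m:ℝ)/2 - 1)) (q k) :=
      h3.rpow_const (Or.inl hx.ne')
    have h5 := (h2.mul h4).const_mul (normSq p ^ l)
    have e1 : q k ^ 2 + a = normSq q := by rw [ha]; ring
    have e2 : p k * q k + b = dotP p q := by rw [hb]; ring
    rw [e2] at h5
    have hfun : (fun y => normSq p ^ l * ((p k * y + b) ^ n * (y ^ 2 + a) ^ (-(m:ℝ)/2)))
        = (fun t => normSq p ^ l * (p k * t + b) ^ n * (t ^ 2 + a) ^ (-(m:ℝ)/2)) := by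
      funext t; ring
    simp only [Pi.mul_apply] at h5
    rw [hfun] at h5
    refine h5.congr_deriv ?_
    unfold DQv; rw [e1]; ring
  -- transfer along eventual equality
  have hev : ∀ᶠ t in nhds (q k), Function.update q k t ≠ 0 := by
    have hc : Continuous fun t : ℝ => Function.update q k t :=
      continuous_const.update k continuous_id
    have : Function.update q k (q k) = q := Function.update_eq_self k q
    exact hc.continuousAt.eventually_ne (by rw [this]; exact hq)
  apply hg.congr_of_eventuallyEq
  filter_upwards [hev] with t ht
  rw [extM, dif_pos ht]
  have : (⟨Function.update q k t, ht⟩, p) = ((⟨Function.update q k t, ht⟩ : {q : Fin 3 → ℝ // q ≠ 0}), p) := rfl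
  rw [Wmon_apply]
  simp only [normSq_update, dotP_update_right]
  rfl

lemma hasDerivAt_extP (l m n : ℕ) {q : Fin 3 → ℝ} (p : Fin 3 → ℝ) (hq : q ≠ 0) (k : Fin 3) :
    HasDerivAt (fun t => extM (Wmon l m n) q (Function.update p k t))
      (DPv l m n q p k) (p k) := by
  set c := normSq p - p k ^ 2 with hc
  set b := dotP p q - p k * q k with hb
  have heq : (fun t => extM (Wmon l m n) q (Function.update p k t))
      = fun t : ℝ => (t ^ 2 + c) ^ l * (q k * t + b) ^ n * normSq q ^ (-(m:ℝ)/2) := by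
    funext t
    rw [extM, dif_pos hq, Wmon_apply]
    simp only [normSq_update, dotP_update_left]
    rfl
  rw [heq]
  have h1 : HasDerivAt (fun t : ℝ => t ^ 2 + c) (2 * p k) (p k) := by
    simpa using (hasDerivAt_pow 2 (p k)).add_const c
  have h2 : HasDerivAt (fun t : ℝ => (t ^ 2 + c) ^ l)
      ((l:ℝ) * (p k ^ 2 + c) ^ (l-1) * (2 * p k)) (p k) := h1.pow l
  have h3 : HasDerivAt (fun t : ℝ => q k * t + b) (q k) (p k) := by
    simpa using ((hasDerivAt_id (p k)).const_mul (q k)).add_const b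
  have h4 : HasDerivAt (fun t : ℝ => (q k * t + b) ^ n)
      ((n:ℝ) * (q k * p k + b) ^ (n-1) * q k) (p k) := h3.pow n
  have h5 := (h2.mul h4).mul_const (normSq q ^ (-(m:ℝ)/2))
  have e1 : p k ^ 2 + c = normSq p := by rw [hc]; ring
  have e2 : q k * p k + b = dotP p q := by rw [hb]; ring
  simp only [Pi.mul_apply] at h5
  rw [e1, e2] at h5
  refine h5.congr_deriv ?_
  unfold DPv; ring

lemma pdQ_mon (l m n : ℕ) {q : Fin 3 → ℝ} (p : Fin 3 → ℝ) (hq : q ≠ 0) (k : Fin 3) :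
    pdQ (extM (Wmon l m n)) q p k = DQv l m n q p k :=
  (hasDerivAt_extQ l m n p hq k).deriv

lemma pdP_mon (l m n : ℕ) {q : Fin 3 → ℝ} (p : Fin 3 → ℝ) (hq : q ≠ 0) (k : Fin 3) :
    pdP (extM (Wmon l m n)) q p k = DPv l m n q p k :=
  (hasDerivAt_extP l m n p hq k).deriv

lemma pbr_mon (l m n l' m' n' : ℕ) {q : Fin 3 → ℝ} (p : Fin 3 → ℝ) (hq : q ≠ 0) :
    pbr (extM (Wmon l m n)) (extM (Wmon l' m' n')) q p
      = (2*(n:ℝ)*(l':ℝ) - 2*(n':ℝ)*(l:ℝ) + (n:ℝ)*(m':ℝ) - (n':ℝ)*(m:ℝ))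
          * (normSq p ^ (l+l') * dotP p q ^ (n+n'-1)
              * (normSq q ^ (-(m:ℝ)/2) * normSq q ^ (-(m':ℝ)/2)))
      + (2*((l:ℝ)*(m':ℝ) - (l':ℝ)*(m:ℝ)))
          * (normSq p ^ (l+l'-1) * dotP p q ^ (n+n'+1)
              * (normSq q ^ (-(m:ℝ)/2) * normSq q ^ (-(m':ℝ)/2) / normSq q)) := by
  have hx : (0:ℝ) < normSq q := normSq_pos hq
  have em : normSq q ^ (-(m:ℝ)/2 - 1) = normSq q ^ (-(m:ℝ)/2) / normSq q := by
    rw [Real.rpow_sub hx, Real.rpow_one]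
  have em' : normSq q ^ (-(m':ℝ)/2 - 1) = normSq q ^ (-(m':ℝ)/2) / normSq q := by
    rw [Real.rpow_sub hx, Real.rpow_one]
  rw [pbr]
  simp only [pdQ_mon _ _ _ p hq, pdP_mon _ _ _ p hq, DQv, DPv]
  rw [Finset.sum_sub_distrib, sum3, sum3, em, em']
  set u := normSq p
  set s := dotP p q
  set x := normSq q
  set y := x ^ (-(m:ℝ)/2)
  set z := x ^ (-(m':ℝ)/2)
  have e1 : ∀ a b : ℕ, a+1+(b+1)-1 = a+b+1 := fun a b => by omega
  rcases n with _|n <;> rcases n' with _|n' <;> rcases l with _|l <;> rcases l' with _|l' <;>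
    simp only [e1, Nat.zero_add, Nat.add_zero, Nat.add_sub_cancel, Nat.zero_sub,
      Nat.succ_sub_one, Nat.cast_zero, Nat.cast_succ, pow_zero, pow_succ] <;>
    (field_simp <;> (try ring) <;> (try exact Or.inl trivial))

lemma pbrM_mon (l m n l' m' n' : ℕ) :
    pbrM (Wmon l m n) (Wmon l' m' n')
      = (2*(n:ℝ)*(l':ℝ) - 2*(n':ℝ)*(l:ℝ) + (n:ℝ)*(m':ℝ) - (n':ℝ)*(m:ℝ))
          • Wmon (l+l') (m+m') (n+n'-1)
      + (2*((l:ℝ)*(m':ℝ) - (l':ℝ)*(m:ℝ))) • Wmon (l+l'-1) (m+m'+2) (n+n'+1) := by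
  funext x
  obtain ⟨⟨q, hq⟩, p⟩ := x
  have hx : (0:ℝ) < normSq q := normSq_pos hq
  have E1 : normSq q ^ (-((m+m' : ℕ) : ℝ)/2)
      = normSq q ^ (-(m:ℝ)/2) * normSq q ^ (-(m':ℝ)/2) := by
    rw [← Real.rpow_add hx]; push_cast; ring_nf
  have E2 : normSq q ^ (-((m+m'+2 : ℕ) : ℝ)/2)
      = normSq q ^ (-(m:ℝ)/2) * normSq q ^ (-(m':ℝ)/2) / normSq q := by
    have e : -((m+m'+2 : ℕ) : ℝ)/2 = (-(m:ℝ)/2) + (-(m':ℝ)/2) + (-1) := by push_cast; ring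
    rw [e, Real.rpow_add hx, Real.rpow_add hx, Real.rpow_neg_one]
    ring
  show pbr (extM (Wmon l m n)) (extM (Wmon l' m' n')) q p = _
  rw [pbr_mon l m n l' m' n' p hq, Pi.add_apply, Pi.smul_apply, Pi.smul_apply,
    Wmon_apply, Wmon_apply]
  simp only [smul_eq_mul]
  rw [E1, E2]

lemma pbrM_mon_mem (i j : ℚ) (l m n l' m' n' : ℕ)
    (h1 : (l:ℚ) + (m:ℚ) - (n:ℚ)/2 = i + 1) (h2 : (l':ℚ) + (m':ℚ) - (n':ℚ)/2 = j + 1) :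
    pbrM (Wmon l m n) (Wmon l' m' n') ∈ Wspace (i + j + 3/2) := by
  rw [pbrM_mon]
  apply Submodule.add_mem
  · by_cases hnn : n + n' = 0
    · obtain ⟨hn, hn'⟩ := Nat.add_eq_zero.1 hnn
      subst hn; subst hn'
      simp
    · refine Submodule.smul_mem _ _ (Submodule.subset_span ?_)
      refine ⟨l+l', m+m', n+n'-1, ?_, rfl⟩
      have h1' : 1 ≤ n + n' := Nat.one_le_iff_ne_zero.2 hnn
      push_cast [Nat.cast_sub h1']
      linarith
  · by_cases hll : l + l' = 0
    · obtain ⟨hl, hl'⟩ := Nat.add_eq_zero.1 hll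
      subst hl; subst hl'
      simp
    · refine Submodule.smul_mem _ _ (Submodule.subset_span ?_)
      refine ⟨l+l'-1, m+m'+2, n+n'+1, ?_, rfl⟩
      have h1' : 1 ≤ l + l' := Nat.one_le_iff_ne_zero.2 hll
      push_cast [Nat.cast_sub h1']
      linarith

lemma extM_sum {N : ℕ} (c : Fin N → ℝ) (f : Fin N → Mspace → ℝ) (q p : Fin 3 → ℝ) :
    extM (∑ i, c i • f i) q p = ∑ i, c i * extM (f i) q p := by
  by_cases h : q ≠ 0
  · simp [extM, h, Finset.sum_apply]
  · simp [extM, h]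

/-- for half-integers `i, j` whose spaces `W_i, W_j` have at least one generating
monomial, and for `F ∈ W_i`, `G ∈ W_j`, the Poisson bracket `{F,G}` lies in `W_{i+j+3/2}`. -/
theorem poisson_bracket_W_grading (i j : ℚ)
    (hi : ∃ l m n : ℕ, (l : ℚ) + (m : ℚ) - (n : ℚ) / 2 = i + 1)
    (hj : ∃ l m n : ℕ, (l : ℚ) + (m : ℚ) - (n : ℚ) / 2 = j + 1)
    (F G : Mspace → ℝ) (hF : F ∈ Wspace i) (hG : G ∈ Wspace j) :
    pbrM F G ∈ Wspace (i + j + 3 / 2) := by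
  clear hi hj
  rw [Wspace] at hF hG
  obtain ⟨N, c, f, hFsum⟩ := Submodule.mem_span_set'.1 hF
  obtain ⟨N', d, g, hGsum⟩ := Submodule.mem_span_set'.1 hG
  choose L Mm Nn hdeg hmon using fun i => (f i).2
  choose L' Mm' Nn' hdeg' hmon' using fun j => (g j).2
  have hFeq : F = ∑ i, c i • Wmon (L i) (Mm i) (Nn i) := by
    rw [← hFsum]
    exact Finset.sum_congr rfl fun i _ => by rw [hmon i]
  have hGeq : G = ∑ j, d j • Wmon (L' j) (Mm' j) (Nn' j) := by
    rw [← hGsum]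
    exact Finset.sum_congr rfl fun j _ => by rw [hmon' j]
  have key : pbrM F G = ∑ i, ∑ j, (c i * d j) •
      pbrM (Wmon (L i) (Mm i) (Nn i)) (Wmon (L' j) (Mm' j) (Nn' j)) := by
    funext x
    obtain ⟨⟨q, hq⟩, p⟩ := x
    have hdq : ∀ k, pdQ (extM F) q p k = ∑ i, c i * DQv (L i) (Mm i) (Nn i) q p k := by
      intro k
      refine HasDerivAt.deriv ?_
      have e : (fun t => extM F (Function.update q k t) p)
          = fun t => ∑ i, c i * extM (Wmon (L i) (Mm i) (Nn i)) (Function.update q k t) p := by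
        funext t; rw [hFeq, extM_sum]
      rw [e]
      exact HasDerivAt.fun_sum fun i _ => (hasDerivAt_extQ _ _ _ p hq k).const_mul (c i)
    have hdp : ∀ k, pdP (extM F) q p k = ∑ i, c i * DPv (L i) (Mm i) (Nn i) q p k := by
      intro k
      refine HasDerivAt.deriv ?_
      have e : (fun t => extM F q (Function.update p k t))
          = fun t => ∑ i, c i * extM (Wmon (L i) (Mm i) (Nn i)) q (Function.update p k t) := by
        funext t; rw [hFeq, extM_sum]
      rw [e]
      exact HasDerivAt.fun_sum fun i _ => (hasDerivAt_extP _ _ _ _ hq k).const_mul (c i)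
    have hdq' : ∀ k, pdQ (extM G) q p k = ∑ j, d j * DQv (L' j) (Mm' j) (Nn' j) q p k := by
      intro k
      refine HasDerivAt.deriv ?_
      have e : (fun t => extM G (Function.update q k t) p)
          = fun t => ∑ j, d j * extM (Wmon (L' j) (Mm' j) (Nn' j)) (Function.update q k t) p := by
        funext t; rw [hGeq, extM_sum]
      rw [e]
      exact HasDerivAt.fun_sum fun j _ => (hasDerivAt_extQ _ _ _ p hq k).const_mul (d j)
    have hdp' : ∀ k, pdP (extM G) q p k = ∑ j, d j * DPv (L' j) (Mm' j) (Nn' j) q p k := by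
      intro k
      refine HasDerivAt.deriv ?_
      have e : (fun t => extM G q (Function.update p k t))
          = fun t => ∑ j, d j * extM (Wmon (L' j) (Mm' j) (Nn' j)) q (Function.update p k t) := by
        funext t; rw [hGeq, extM_sum]
      rw [e]
      exact HasDerivAt.fun_sum fun j _ => (hasDerivAt_extP _ _ _ _ hq k).const_mul (d j)
    show pbr (extM F) (extM G) q p = _
    rw [pbr]
    have step1 : ∀ k : Fin 3,
        pdQ (extM F) q p k * pdP (extM G) q p k - pdP (extM F) q p k * pdQ (extM G) q p k
        = ∑ i, ∑ j, c i * d j *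
            (DQv (L i) (Mm i) (Nn i) q p k * DPv (L' j) (Mm' j) (Nn' j) q p k
             - DPv (L i) (Mm i) (Nn i) q p k * DQv (L' j) (Mm' j) (Nn' j) q p k) := by
      intro k
      rw [hdq k, hdp k, hdq' k, hdp' k, Finset.sum_mul_sum, Finset.sum_mul_sum,
        ← Finset.sum_sub_distrib]
      refine Finset.sum_congr rfl fun i _ => ?_
      rw [← Finset.sum_sub_distrib]
      refine Finset.sum_congr rfl fun j _ => ?_
      ring
    rw [Finset.sum_congr rfl fun k _ => step1 k, Finset.sum_comm]
    rw [Finset.sum_apply]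
    refine Finset.sum_congr rfl fun i _ => ?_
    rw [Finset.sum_comm, Finset.sum_apply]
    refine Finset.sum_congr rfl fun j _ => ?_
    rw [Pi.smul_apply, smul_eq_mul]
    show _ = c i * d j * pbr (extM (Wmon (L i) (Mm i) (Nn i)))
        (extM (Wmon (L' j) (Mm' j) (Nn' j))) q p
    rw [pbr, Finset.mul_sum]
    refine Finset.sum_congr rfl fun k _ => ?_
    rw [pdQ_mon _ _ _ p hq, pdP_mon _ _ _ p hq, pdQ_mon _ _ _ p hq, pdP_mon _ _ _ p hq]
  rw [key]
  refine Submodule.sum_mem _ fun a _ => Submodule.sum_mem _ fun b _ => ?_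
  exact Submodule.smul_mem _ _ (pbrM_mon_mem i j _ _ _ _ _ _ (hdeg a) (hdeg' b))

end
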